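/- arXiv:1810.03116 — 4 statements merged into one kernel-verified Lean document; each statement's English description precedes it below -/
import Mathlib

section
/- Let M be a 3×3 real symmetric positive-definite matrix with entries ψ_{jk} (so ψ_{jk} = ψ_{kj}). Then tr(M⁻¹) = 1/ψ_{11} + 1/ψ_{22} + 1/ψ_{33} holds if and only if ψ_{12} = ψ_{13} = ψ_{23} = 0. -/
/-!
Let `w` be the `i`-th column of `M⁻¹`, so that `M w = eᵢ`. The quadratic form of `M` at
`eᵢ - Mᵢᵢ w` equals `Mᵢᵢ (Mᵢᵢ (M⁻¹)ᵢᵢ - 1)`, so positive definiteness gives `(M⁻¹)ᵢᵢ ≥ 1 / Mᵢᵢ`,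
with equality only if `eᵢ = Mᵢᵢ w`, i.e. only if `eᵢ` is an eigenvector of `M`, which means that
the `i`-th column of `M` vanishes off the diagonal. Summing over `i`,
`tr M⁻¹ ≥ ∑ 1 / Mᵢᵢ`, with equality exactly when `M` is diagonal.
-/

namespace Matrix

lemma col_eq_smul_single_iff {n R : Type*} [DecidableEq n] [Semiring R] (M : Matrix n n R)
    (i : n) : M.col i = M i i • Pi.single i 1 ↔ ∀ j, j ≠ i → M j i = 0 := by
  refine ⟨fun h j hj ↦ by simpa [hj] using congrFun h j, fun h ↦ funext fun j ↦ ?_⟩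
  obtain rfl | hj := eq_or_ne j i
  · simp
  · simp [h j hj, hj]

lemma IsSymm.isDiag_iff_fin_three {R : Type*} [Zero R] {M : Matrix (Fin 3) (Fin 3) R}
    (hM : M.IsSymm) : M.IsDiag ↔ M 0 1 = 0 ∧ M 0 2 = 0 ∧ M 1 2 = 0 := by
  refine ⟨fun h ↦ ⟨h (by decide), h (by decide), h (by decide)⟩, fun ⟨h01, h02, h12⟩ ↦ ?_⟩
  intro i j hij
  fin_cases i <;> fin_cases j <;> simp_all [← hM.apply 0 1, ← hM.apply 0 2, ← hM.apply 1 2]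

lemma PosDef.isSymm {n : Type*} [Fintype n] {M : Matrix n n ℝ} (hM : M.PosDef) : M.IsSymm :=
  isHermitian_iff_isSymm.mp hM.isHermitian

section CommRing

variable {n R : Type*} [Fintype n] [DecidableEq n] [CommRing R] {M : Matrix n n R}

lemma mulVec_inv_col (hM : IsUnit M.det) (i : n) : M *ᵥ M⁻¹.col i = Pi.single i 1 := by
  rw [← mulVec_single_one, mulVec_mulVec, mul_nonsing_inv M hM, one_mulVec]

lemma IsSymm.dotProduct_mulVec_single_sub_smul_inv_col (hsymm : M.IsSymm) (hdet : IsUnit M.det)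
    (i : n) (c : R) :
    (Pi.single i 1 - c • M⁻¹.col i) ⬝ᵥ M *ᵥ (Pi.single i 1 - c • M⁻¹.col i) =
      M i i - 2 * c + c ^ 2 * M⁻¹ i i := by
  have hw := mulVec_inv_col hdet i
  have hcross : M⁻¹.col i ⬝ᵥ M.col i = 1 := by
    rw [← mulVec_single_one M, dotProduct_mulVec, ← mulVec_transpose, hsymm.eq, hw,
      dotProduct_single_one, Pi.single_eq_same]
  simp only [mulVec_sub, mulVec_smul, hw, dotProduct_sub, sub_dotProduct, dotProduct_smul,
    smul_dotProduct, dotProduct_single_one, single_one_dotProduct, mulVec_single_one, hcross,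
    col_apply, Pi.sub_apply, Pi.smul_apply, Pi.single_eq_same, smul_eq_mul]
  ring

end CommRing

variable {n : Type*} [Fintype n] [DecidableEq n] {M : Matrix n n ℝ}

namespace PosDef

lemma dotProduct_mulVec_single_sub_diag_smul_inv_col (hM : M.PosDef) (i : n) :
    (Pi.single i 1 - M i i • M⁻¹.col i) ⬝ᵥ M *ᵥ (Pi.single i 1 - M i i • M⁻¹.col i) =
      M i i * (M i i * M⁻¹ i i - 1) := by
  rw [hM.isSymm.dotProduct_mulVec_single_sub_smul_inv_col (hM.isUnit.map detMonoidHom)]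
  ring

lemma one_div_le_inv_apply_self (hM : M.PosDef) (i : n) : 1 / M i i ≤ M⁻¹ i i := by
  have hq := hM.posSemidef.dotProduct_mulVec_nonneg (Pi.single i 1 - M i i • M⁻¹.col i)
  rw [star_trivial, hM.dotProduct_mulVec_single_sub_diag_smul_inv_col] at hq
  rw [div_le_iff₀' hM.diag_pos]
  nlinarith [hM.diag_pos (i := i)]

lemma inv_apply_self_eq_one_div_iff (hM : M.PosDef) (i : n) :
    M⁻¹ i i = 1 / M i i ↔ M.col i = M i i • Pi.single i 1 := by
  have hMii : M i i ≠ 0 := hM.diag_pos.ne'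
  constructor
  · intro h
    have hv : Pi.single i 1 - M i i • M⁻¹.col i = 0 := by
      by_contra hv
      have hq := hM.dotProduct_mulVec_pos hv
      rw [star_trivial, hM.dotProduct_mulVec_single_sub_diag_smul_inv_col, h,
        mul_one_div_cancel hMii, sub_self, mul_zero] at hq
      exact hq.false
    rw [sub_eq_zero] at hv
    calc M.col i = M *ᵥ Pi.single i 1 := (mulVec_single_one M i).symm
      _ = M *ᵥ (M i i • M⁻¹.col i) := by rw [← hv]
      _ = M i i • Pi.single i 1 := by
        rw [mulVec_smul, mulVec_inv_col (hM.isUnit.map detMonoidHom)]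
  · intro h
    have hcol := congrFun (congrArg (M⁻¹ *ᵥ ·) h) i
    rw [← mulVec_single_one, mulVec_mulVec, nonsing_inv_mul M (hM.isUnit.map detMonoidHom),
      one_mulVec, mulVec_smul, mulVec_single_one] at hcol
    simp only [Pi.single_eq_same, Pi.smul_apply, col_apply, smul_eq_mul] at hcol
    rw [eq_div_iff hMii]
    linarith

lemma trace_inv_eq_sum_one_div_diag_iff (hM : M.PosDef) :
    M⁻¹.trace = ∑ i, 1 / M i i ↔ M.IsDiag :=
  calc M⁻¹.trace = ∑ i, 1 / M i i ↔ ∀ i, M⁻¹ i i = 1 / M i i := by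
        rw [trace, eq_comm]
        simp only [diag_apply]
        rw [Finset.sum_eq_sum_iff_of_le fun i _ ↦ hM.one_div_le_inv_apply_self i]
        simp only [Finset.mem_univ, forall_const, eq_comm]
    _ ↔ ∀ i j, j ≠ i → M j i = 0 := by
        simp only [hM.inv_apply_self_eq_one_div_iff, col_eq_smul_single_iff]
    _ ↔ M.IsDiag := ⟨fun h i j hij ↦ h j i hij, fun h j i hij ↦ h hij⟩

end PosDef
end Matrix

theorem trace_inv_eq_sum_inv_diag_3x3_iff_general (M : Matrix (Fin 3) (Fin 3) ℝ)
    (hpd : M.PosDef) :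
    (M⁻¹).trace = 1 / M 0 0 + 1 / M 1 1 + 1 / M 2 2 ↔
      M 0 1 = 0 ∧ M 0 2 = 0 ∧ M 1 2 = 0 := by
  rw [← Fin.sum_univ_three (fun i ↦ 1 / M i i), hpd.trace_inv_eq_sum_one_div_diag_iff,
    hpd.isSymm.isDiag_iff_fin_three]

theorem trace_inv_eq_sum_inv_diag_3x3_iff (M : Matrix (Fin 3) (Fin 3) ℝ)
    (hsymm : M.IsSymm) (hpd : M.PosDef) :
    (M⁻¹).trace = 1 / M 0 0 + 1 / M 1 1 + 1 / M 2 2 ↔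
      M 0 1 = 0 ∧ M 0 2 = 0 ∧ M 1 2 = 0 :=
  trace_inv_eq_sum_inv_diag_3x3_iff_general M hpd
end

section
/- Let N be a natural number with N ≥ 4, and let α, θ, a, d, σ be real numbers with a ≠ 0, d ≠ 0, σ ≠ 0. Define the 3×3 real matrix F by F_{11} = (4/a²)·Σ_{i=1}^{N} sin²α·cos²θ·cos²(2πi/N)/(d²σ²), F_{22} = (4/a²)·Σ_{i=1}^{N} sin²α·cos²θ·sin²(2πi/N)/(d²σ²), F_{33} = (4/a²)·Σ_{i=1}^{N} sin²α·tan²(θ−α)·cos²θ/(d²σ²), F_{12} = F_{21} = (4/a²)·Σ_{i=1}^{N} sin²α·cos²θ·sin(2πi/N)·cos(2πi/N)/(d²σ²), F_{13} = F_{31} = (4/a²)·Σ_{i=1}^{N} sin²α·tan(θ−α)·cos²θ·cos(2πi/N)/(d²σ²), and F_{23} = F_{32} = (4/a²)·Σ_{i=1}^{N} sin²α·tan(θ−α)·cos²θ·sin(2πi/N)/(d²σ²). Then F is the diagonal matrix with diagonal entries (2N·sin²α·cos²θ/(a²d²σ²), 2N·sin²α·cos²θ/(a²d²σ²), 4N·sin²α·tan²(θ−α)·cos²θ/(a²d²σ²));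 in particular F_{12} = F_{13} = F_{23} = 0 and F_{11} = F_{22}. -/
/-!
For `N ∤ k` the numbers `exp (k * 2πi / N)`, `i = 1, …, N`, run over a full period of a nontrivial
`N`-th root of unity, so their sum vanishes; its real and imaginary parts are the sums of
`cos (k * 2πi / N)` and `sin (k * 2πi / N)`. Taking `k = 1` kills the off-diagonal entries involving a
single trigonometric factor, and `k = 2` together with the double-angle formulas gives
`∑ cos² = ∑ sin² = N / 2` and `∑ sin * cos = 0` as soon as `N > 2`.
-/

open Real Finset

theorem Finset.sum_Icc_one_eq_sum_range_of_eq {M : Type*} [AddCommMonoid M] [IsRightCancelAdd M]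
    {f : ℕ → M} {N : ℕ} (h : f N = f 0) : ∑ i ∈ Icc 1 N, f i = ∑ i ∈ range N, f i := by
  have hshift : ∑ i ∈ Icc 1 N, f i = ∑ i ∈ range N, f (i + 1) := by
    rw [← Ico_add_one_right_eq_Icc, sum_Ico_eq_sum_range]
    simp [add_comm]
  apply add_right_cancel (b := f 0)
  rw [hshift, ← sum_range_succ', sum_range_succ_comm, h, add_comm]

theorem geom_sum_eq_zero_of_pow_eq_one {R : Type*} [Ring R] [NoZeroDivisors R] {z : R} {N : ℕ}
    (hz : z ≠ 1) (hzN : z ^ N = 1) : ∑ i ∈ range N, z ^ i = 0 := by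
  have h := geom_sum_mul z N
  rw [hzN, sub_self] at h
  exact (mul_eq_zero.1 h).resolve_right (sub_ne_zero.2 hz)

open Complex in
theorem sum_exp_two_pi_mul_div_eq_zero {N k : ℕ} (hk : ¬ N ∣ k) :
    ∑ i ∈ Icc 1 N, exp (↑(k * (2 * π * i / N)) * I) = 0 := by
  obtain rfl | hN := eq_or_ne N 0
  · simp
  set z := exp (2 * π * I / N) ^ k
  have hζ := isPrimitiveRoot_exp N hN
  have hterm : ∀ i : ℕ, exp (↑(k * (2 * π * i / N)) * I) = z ^ i := fun i => by
    rw [← pow_mul, ← Complex.exp_nat_mul]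
    push_cast
    ring_nf
  have hz : z ≠ 1 := by rwa [Ne, hζ.pow_eq_one_iff_dvd]
  have hzN : z ^ N = 1 := by rw [← pow_mul, mul_comm k N, pow_mul, hζ.pow_eq_one, one_pow]
  simp_rw [hterm]
  rw [sum_Icc_one_eq_sum_range_of_eq (by rw [hzN, pow_zero]), geom_sum_eq_zero_of_pow_eq_one hz hzN]

theorem sum_cos_two_pi_mul_div_eq_zero {N k : ℕ} (hk : ¬ N ∣ k) :
    ∑ i ∈ Icc 1 N, cos (k * (2 * π * i / N)) = 0 := by
  have h := congrArg Complex.re (sum_exp_two_pi_mul_div_eq_zero hk)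
  simpa only [Complex.re_sum, Complex.exp_ofReal_mul_I_re, Complex.zero_re] using h

theorem sum_sin_two_pi_mul_div_eq_zero {N k : ℕ} (hk : ¬ N ∣ k) :
    ∑ i ∈ Icc 1 N, sin (k * (2 * π * i / N)) = 0 := by
  have h := congrArg Complex.im (sum_exp_two_pi_mul_div_eq_zero hk)
  simpa only [Complex.im_sum, Complex.exp_ofReal_mul_I_im, Complex.zero_im] using h

theorem sum_cos_sq_two_pi_mul_div {N : ℕ} (hN : 2 < N) :
    ∑ i ∈ Icc 1 N, cos (2 * π * i / N) ^ 2 = N / 2 := by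
  have h := sum_cos_two_pi_mul_div_eq_zero (Nat.not_dvd_of_pos_of_lt two_pos hN)
  push_cast at h
  simp_rw [cos_sq, sum_add_distrib, ← sum_div, h]
  simp

theorem sum_sin_sq_two_pi_mul_div {N : ℕ} (hN : 2 < N) :
    ∑ i ∈ Icc 1 N, sin (2 * π * i / N) ^ 2 = N / 2 := by
  have h := sum_cos_two_pi_mul_div_eq_zero (Nat.not_dvd_of_pos_of_lt two_pos hN)
  push_cast at h
  simp_rw [sin_sq_eq_half_sub, sum_sub_distrib, ← sum_div, h]
  simp

theorem sum_sin_mul_cos_two_pi_mul_div {N : ℕ} (hN : 2 < N) :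
    ∑ i ∈ Icc 1 N, sin (2 * π * i / N) * cos (2 * π * i / N) = 0 := by
  have h := sum_sin_two_pi_mul_div_eq_zero (Nat.not_dvd_of_pos_of_lt two_pos hN)
  push_cast at h
  have sin_mul_cos (x : ℝ) : sin x * cos x = sin (2 * x) / 2 := by rw [sin_two_mul]; ring
  simp_rw [sin_mul_cos, ← sum_div, h, zero_div]

theorem fim_diagonal_under_USC_general (N : ℕ) (hN : 4 ≤ N)
    (α θ a d σ : ℝ)
    (F : Matrix (Fin 3) (Fin 3) ℝ)
    (hF00 : F 0 0 = (4 / a ^ 2) * ∑ i ∈ Finset.Icc 1 N,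
      Real.sin α ^ 2 * Real.cos θ ^ 2 * Real.cos (2 * Real.pi * i / N) ^ 2 / (d ^ 2 * σ ^ 2))
    (hF11 : F 1 1 = (4 / a ^ 2) * ∑ i ∈ Finset.Icc 1 N,
      Real.sin α ^ 2 * Real.cos θ ^ 2 * Real.sin (2 * Real.pi * i / N) ^ 2 / (d ^ 2 * σ ^ 2))
    (hF22 : F 2 2 = (4 / a ^ 2) * ∑ i ∈ Finset.Icc 1 N,
      Real.sin α ^ 2 * Real.tan (θ - α) ^ 2 * Real.cos θ ^ 2 / (d ^ 2 * σ ^ 2))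
    (hF01 : F 0 1 = (4 / a ^ 2) * ∑ i ∈ Finset.Icc 1 N,
      Real.sin α ^ 2 * Real.cos θ ^ 2 * Real.sin (2 * Real.pi * i / N) *
        Real.cos (2 * Real.pi * i / N) / (d ^ 2 * σ ^ 2))
    (hF10 : F 1 0 = F 0 1)
    (hF02 : F 0 2 = (4 / a ^ 2) * ∑ i ∈ Finset.Icc 1 N,
      Real.sin α ^ 2 * Real.tan (θ - α) * Real.cos θ ^ 2 *
        Real.cos (2 * Real.pi * i / N) / (d ^ 2 * σ ^ 2))
    (hF20 : F 2 0 = F 0 2)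
    (hF12 : F 1 2 = (4 / a ^ 2) * ∑ i ∈ Finset.Icc 1 N,
      Real.sin α ^ 2 * Real.tan (θ - α) * Real.cos θ ^ 2 *
        Real.sin (2 * Real.pi * i / N) / (d ^ 2 * σ ^ 2))
    (hF21 : F 2 1 = F 1 2) :
    F = Matrix.diagonal
      ![2 * N * Real.sin α ^ 2 * Real.cos θ ^ 2 / (a ^ 2 * d ^ 2 * σ ^ 2),
        2 * N * Real.sin α ^ 2 * Real.cos θ ^ 2 / (a ^ 2 * d ^ 2 * σ ^ 2),
        4 * N * Real.sin α ^ 2 * Real.tan (θ - α) ^ 2 * Real.cos θ ^ 2 / (a ^ 2 * d ^ 2 * σ ^ 2)]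
      ∧ F 0 1 = 0 ∧ F 0 2 = 0 ∧ F 1 2 = 0 ∧ F 0 0 = F 1 1 := by
  have hN2 : 2 < N := by omega
  have hcos : ∑ i ∈ Icc 1 N, cos (2 * π * i / N) = 0 := by
    simpa using sum_cos_two_pi_mul_div_eq_zero (k := 1) (Nat.not_dvd_of_pos_of_lt one_pos (by omega))
  have hsin : ∑ i ∈ Icc 1 N, sin (2 * π * i / N) = 0 := by
    simpa using sum_sin_two_pi_mul_div_eq_zero (k := 1) (Nat.not_dvd_of_pos_of_lt one_pos (by omega))
  have h00 : F 0 0 = 2 * N * sin α ^ 2 * cos θ ^ 2 / (a ^ 2 * d ^ 2 * σ ^ 2) := by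
    rw [hF00, ← sum_div, ← mul_sum, sum_cos_sq_two_pi_mul_div hN2]; ring
  have h11 : F 1 1 = 2 * N * sin α ^ 2 * cos θ ^ 2 / (a ^ 2 * d ^ 2 * σ ^ 2) := by
    rw [hF11, ← sum_div, ← mul_sum, sum_sin_sq_two_pi_mul_div hN2]; ring
  have h22 : F 2 2 = 4 * N * sin α ^ 2 * tan (θ - α) ^ 2 * cos θ ^ 2 / (a ^ 2 * d ^ 2 * σ ^ 2) := by
    rw [hF22, sum_const, Nat.card_Icc, nsmul_eq_mul, Nat.add_sub_cancel]; ring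
  have h01 : F 0 1 = 0 := by
    simp_rw [hF01, mul_assoc (sin α ^ 2 * cos θ ^ 2)]
    rw [← sum_div, ← mul_sum, sum_sin_mul_cos_two_pi_mul_div hN2]; ring
  have h02 : F 0 2 = 0 := by
    rw [hF02, ← sum_div, ← mul_sum, hcos]; ring
  have h12 : F 1 2 = 0 := by
    rw [hF12, ← sum_div, ← mul_sum, hsin]; ring
  refine ⟨?_, h01, h02, h12, h00.trans h11.symm⟩
  ext i j
  fin_cases i <;> fin_cases j <;> simp [h00, h11, h22, h01, h02, h12, hF10, hF20, hF21]

theorem fim_diagonal_under_USC (N : ℕ) (hN : 4 ≤ N)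
    (α θ a d σ : ℝ) (ha : a ≠ 0) (hd : d ≠ 0) (hσ : σ ≠ 0)
    (F : Matrix (Fin 3) (Fin 3) ℝ)
    (hF00 : F 0 0 = (4 / a ^ 2) * ∑ i ∈ Finset.Icc 1 N,
      Real.sin α ^ 2 * Real.cos θ ^ 2 * Real.cos (2 * Real.pi * i / N) ^ 2 / (d ^ 2 * σ ^ 2))
    (hF11 : F 1 1 = (4 / a ^ 2) * ∑ i ∈ Finset.Icc 1 N,
      Real.sin α ^ 2 * Real.cos θ ^ 2 * Real.sin (2 * Real.pi * i / N) ^ 2 / (d ^ 2 * σ ^ 2))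
    (hF22 : F 2 2 = (4 / a ^ 2) * ∑ i ∈ Finset.Icc 1 N,
      Real.sin α ^ 2 * Real.tan (θ - α) ^ 2 * Real.cos θ ^ 2 / (d ^ 2 * σ ^ 2))
    (hF01 : F 0 1 = (4 / a ^ 2) * ∑ i ∈ Finset.Icc 1 N,
      Real.sin α ^ 2 * Real.cos θ ^ 2 * Real.sin (2 * Real.pi * i / N) *
        Real.cos (2 * Real.pi * i / N) / (d ^ 2 * σ ^ 2))
    (hF10 : F 1 0 = F 0 1)
    (hF02 : F 0 2 = (4 / a ^ 2) * ∑ i ∈ Finset.Icc 1 N,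
      Real.sin α ^ 2 * Real.tan (θ - α) * Real.cos θ ^ 2 *
        Real.cos (2 * Real.pi * i / N) / (d ^ 2 * σ ^ 2))
    (hF20 : F 2 0 = F 0 2)
    (hF12 : F 1 2 = (4 / a ^ 2) * ∑ i ∈ Finset.Icc 1 N,
      Real.sin α ^ 2 * Real.tan (θ - α) * Real.cos θ ^ 2 *
        Real.sin (2 * Real.pi * i / N) / (d ^ 2 * σ ^ 2))
    (hF21 : F 2 1 = F 1 2) :
    F = Matrix.diagonal
      ![2 * N * Real.sin α ^ 2 * Real.cos θ ^ 2 / (a ^ 2 * d ^ 2 * σ ^ 2),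
        2 * N * Real.sin α ^ 2 * Real.cos θ ^ 2 / (a ^ 2 * d ^ 2 * σ ^ 2),
        4 * N * Real.sin α ^ 2 * Real.tan (θ - α) ^ 2 * Real.cos θ ^ 2 / (a ^ 2 * d ^ 2 * σ ^ 2)]
      ∧ F 0 1 = 0 ∧ F 0 2 = 0 ∧ F 1 2 = 0 ∧ F 0 0 = F 1 1 :=
  fim_diagonal_under_USC_general N hN α θ a d σ F hF00 hF11 hF22 hF01 hF10 hF02 hF20 hF12 hF21
end

section
/- Let a, b, x, y, z, x_i, y_i, z_i be real numbers with a > 0, z ≥ z_i, (x − x_i)² + (y − y_i)² > 0, and 2b/a + z + z_i > 0. For a real variable v, define d(v) = √((v − x_i)² + (y − y_i)²), θ(v) = arctan((z − z_i)/d(v)), α(v) = arctan(d(v)/(2b/a + z + z_i)), and T(v) = (1/a)·[ln((1 + sin(θ(v) + α(v)))/cos(θ(v) + α(v))) − ln((1 + sin(θ(v) − α(v)))/cos(θ(v) − α(v)))]. Assume θ(x) + α(x) < π/2. Then T has derivative (2/a)·(x − x_i)/(l·r) at the point x, where d = d(x), l = √(d² + (2b/a + z + z_i)²), and r = √(d²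 + (z − z_i)²). -/
/-!
Put `w = z - zᵢ`, `c = 2b/a + z + zᵢ`, `θ s = arctan (w / s)` and `α s = arctan (s / c)`. Then
`a T = G ∘ d` with `G s = gd⁻¹ (θ s + α s) - gd⁻¹ (θ s - α s)`, where `gd⁻¹ u = log ((1 + sin u) / cos u)`
is the inverse Gudermannian function, an antiderivative of `sec`. With `r = √(s² + w²)` and
`l = √(s² + c²)` one has `θ' = -w / r²`, `α' = c / l²`, `cos (θ + α) = s (c - w) / (r l)` and
`cos (θ - α) = s (c + w) / (r l)`, so `G' = (s² - c w) / (s r l) + (s² + c w) / (s r l) = 2 s / (r l)`;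
finally `d' = (x - xᵢ) / d`.
-/

open Real

noncomputable def invGudermannian (u : ℝ) : ℝ := log ((1 + sin u) / cos u)

theorem hasDerivAt_invGudermannian {u : ℝ} (hu : cos u ≠ 0) :
    HasDerivAt invGudermannian (cos u)⁻¹ u := by
  have hsin : 1 + sin u ≠ 0 := by
    intro h
    have hcos_sq : cos u ^ 2 = 0 := by nlinarith [sin_sq_add_cos_sq u]
    exact hu (pow_eq_zero_iff two_ne_zero |>.mp hcos_sq)
  have hquot := ((hasDerivAt_sin u).const_add 1).div (hasDerivAt_cos u) hu
  refine (hquot.log (div_ne_zero hsin hu)).congr_deriv ?_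
  simp only [Pi.div_apply]
  field_simp
  linear_combination sin_sq_add_cos_sq u

section ArctanDiv

variable {x : ℝ}

theorem cos_arctan_div (hx : 0 < x) (y : ℝ) : cos (arctan (y / x)) = x / √(x ^ 2 + y ^ 2) := by
  rw [cos_arctan, show 1 + (y / x) ^ 2 = (x ^ 2 + y ^ 2) / x ^ 2 by field_simp,
    sqrt_div' _ (sq_nonneg x), sqrt_sq hx.le, one_div_div]

theorem sin_arctan_div (hx : 0 < x) (y : ℝ) : sin (arctan (y / x)) = y / √(x ^ 2 + y ^ 2) := by
  rw [← tan_mul_cos (cos_arctan_pos _).ne', tan_arctan, cos_arctan_div hx]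
  field_simp

theorem hasDerivAt_arctan_const_div (hx : x ≠ 0) (y : ℝ) :
    HasDerivAt (fun s => arctan (y / s)) (-y / (x ^ 2 + y ^ 2)) x := by
  refine (((hasDerivAt_const x y).div (hasDerivAt_id' x) hx).arctan).congr_deriv ?_
  simp only [Pi.div_apply]
  field_simp
  ring

theorem hasDerivAt_arctan_div_const {c : ℝ} (hc : c ≠ 0) :
    HasDerivAt (fun s => arctan (s / c)) (c / (x ^ 2 + c ^ 2)) x := by
  refine (((hasDerivAt_id' x).div_const c).arctan).congr_deriv ?_
  field_simp
  ring

end ArctanDiv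

theorem hasDerivAt_sqrt_sub_sq_add {x p q : ℝ} (h : (x - p) ^ 2 + q ≠ 0) :
    HasDerivAt (fun v => √((v - p) ^ 2 + q)) ((x - p) / √((x - p) ^ 2 + q)) x := by
  refine ((((hasDerivAt_id' x).sub_const p).pow 2).add_const q).sqrt h |>.congr_deriv ?_
  simp only [Pi.pow_apply]
  norm_num
  ring

section TravelTime

variable {w c s : ℝ}

theorem cos_arctan_div_add_arctan_div (hs : 0 < s) (hc : 0 < c) :
    cos (arctan (w / s) + arctan (s / c)) = s * (c - w) / (√(s ^ 2 + c ^ 2) * √(s ^ 2 + w ^ 2)) := by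
  rw [cos_add, cos_arctan_div hs, sin_arctan_div hs, cos_arctan_div hc, sin_arctan_div hc,
    add_comm (c ^ 2)]
  ring

theorem cos_arctan_div_sub_arctan_div (hs : 0 < s) (hc : 0 < c) :
    cos (arctan (w / s) - arctan (s / c)) = s * (c + w) / (√(s ^ 2 + c ^ 2) * √(s ^ 2 + w ^ 2)) := by
  rw [cos_sub, cos_arctan_div hs, sin_arctan_div hs, cos_arctan_div hc, sin_arctan_div hc,
    add_comm (c ^ 2)]
  ring

noncomputable def scaledTravelTime (w c s : ℝ) : ℝ :=
  invGudermannian (arctan (w / s) + arctan (s / c)) -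
    invGudermannian (arctan (w / s) - arctan (s / c))

theorem hasDerivAt_scaledTravelTime (hs : 0 < s) (hc : 0 < c) (hcw : c - w ≠ 0)
    (hcw' : c + w ≠ 0) :
    HasDerivAt (scaledTravelTime w c) (2 * s / (√(s ^ 2 + c ^ 2) * √(s ^ 2 + w ^ 2))) s := by
  have hθ := hasDerivAt_arctan_const_div hs.ne' w
  have hα := hasDerivAt_arctan_div_const (x := s) hc.ne'
  have hl : 0 < √(s ^ 2 + c ^ 2) := by positivity
  have hr : 0 < √(s ^ 2 + w ^ 2) := by positivity
  have hcos_add := cos_arctan_div_add_arctan_div (w := w) hs hc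
  have hcos_sub := cos_arctan_div_sub_arctan_div (w := w) hs hc
  have hne_add : cos (arctan (w / s) + arctan (s / c)) ≠ 0 := by rw [hcos_add]; positivity
  have hne_sub : cos (arctan (w / s) - arctan (s / c)) ≠ 0 := by rw [hcos_sub]; positivity
  have h_add := (hasDerivAt_invGudermannian hne_add).comp s (hθ.add hα)
  have h_sub := (hasDerivAt_invGudermannian hne_sub).comp s (hθ.sub hα)
  refine (h_add.sub h_sub).congr_deriv ?_
  have hl2 := sq_sqrt (by positivity : 0 ≤ s ^ 2 + c ^ 2)
  have hr2 := sq_sqrt (by positivity : 0 ≤ s ^ 2 + w ^ 2)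
  rw [hcos_add, hcos_sub]
  field_simp
  rw [hl2, hr2]
  ring

end TravelTime

theorem deriv_rtt_wrt_x_general (a b x y z xi yi zi : ℝ)
    (hz : zi ≤ z)
    (hpos : 0 < (x - xi) ^ 2 + (y - yi) ^ 2)
    (hb : 0 < 2 * b / a + z + zi)
    (dd θf αf T : ℝ → ℝ)
    (hdd : ∀ v, dd v = Real.sqrt ((v - xi) ^ 2 + (y - yi) ^ 2))
    (hθf : ∀ v, θf v = Real.arctan ((z - zi) / dd v))
    (hαf : ∀ v, αf v = Real.arctan (dd v / (2 * b / a + z + zi)))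
    (hT : ∀ v, T v = (1 / a) *
        (Real.log ((1 + Real.sin (θf v + αf v)) / Real.cos (θf v + αf v)) -
         Real.log ((1 + Real.sin (θf v - αf v)) / Real.cos (θf v - αf v))))
    (hang : θf x + αf x < Real.pi / 2)
    (d l r : ℝ)
    (hd : d = dd x)
    (hl : l = Real.sqrt (d ^ 2 + (2 * b / a + z + zi) ^ 2))
    (hr : r = Real.sqrt (d ^ 2 + (z - zi) ^ 2)) :
    HasDerivAt T ((2 / a) * (x - xi) / (l * r)) x := by
  set c := 2 * b / a + z + zi
  have hT_eq : T = fun v => 1 / a * scaledTravelTime (z - zi) c (dd v) := by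
    funext v
    rw [hT, hθf, hαf]
    rfl
  have hd_eq : d = √((x - xi) ^ 2 + (y - yi) ^ 2) := hd.trans (hdd x)
  have hd_pos : 0 < d := hd_eq ▸ sqrt_pos.mpr hpos
  have hdd' : HasDerivAt dd ((x - xi) / d) x := by
    rw [funext hdd, hd_eq]
    exact hasDerivAt_sqrt_sub_sq_add hpos.ne'
  have hcw : c - (z - zi) ≠ 0 := by
    have hα_pos : 0 < αf x := by rw [hαf, ← hd]; exact arctan_pos.mpr (by positivity)
    have hθ_gt : -(π / 2) < θf x := hθf x ▸ neg_pi_div_two_lt_arctan _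
    have hcos : 0 < cos (θf x + αf x) := cos_pos_of_mem_Ioo ⟨by linarith, hang⟩
    rw [hθf, hαf, ← hd, cos_arctan_div_add_arctan_div hd_pos hb] at hcos
    intro h
    simp [h] at hcos
  have hG := hasDerivAt_scaledTravelTime hd_pos hb hcw (by linarith)
  rw [← hl, ← hr] at hG
  rw [hT_eq]
  refine ((hG.comp_of_eq x hdd' hd).const_mul (1 / a)).congr_deriv ?_
  field_simp

theorem deriv_rtt_wrt_x (a b x y z xi yi zi : ℝ)
    (ha : 0 < a) (hz : zi ≤ z)
    (hpos : 0 < (x - xi) ^ 2 + (y - yi) ^ 2)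
    (hb : 0 < 2 * b / a + z + zi)
    (dd θf αf T : ℝ → ℝ)
    (hdd : ∀ v, dd v = Real.sqrt ((v - xi) ^ 2 + (y - yi) ^ 2))
    (hθf : ∀ v, θf v = Real.arctan ((z - zi) / dd v))
    (hαf : ∀ v, αf v = Real.arctan (dd v / (2 * b / a + z + zi)))
    (hT : ∀ v, T v = (1 / a) *
        (Real.log ((1 + Real.sin (θf v + αf v)) / Real.cos (θf v + αf v)) -
         Real.log ((1 + Real.sin (θf v - αf v)) / Real.cos (θf v - αf v))))
    (hang : θf x + αf x < Real.pi / 2)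
    (d l r : ℝ)
    (hd : d = dd x)
    (hl : l = Real.sqrt (d ^ 2 + (2 * b / a + z + zi) ^ 2))
    (hr : r = Real.sqrt (d ^ 2 + (z - zi) ^ 2)) :
    HasDerivAt T ((2 / a) * (x - xi) / (l * r)) x :=
  deriv_rtt_wrt_x_general a b x y z xi yi zi hz hpos hb dd θf αf T hdd hθf hαf hT hang d l r hd hl
    hr
end

section
/- Let a, b, z, z_i, d be real numbers with a > 0, d > 0, z ≥ z_i, and 2b/a + z + z_i > 0. For a real variable v, define θ(v) = arctan((v − z_i)/d), α(v) = arctan(d/(2b/a + v + z_i)), and T(v) = (1/a)·[ln((1 + sin(θ(v) + α(v)))/cos(θ(v) + α(v))) − ln((1 + sin(θ(v) − α(v)))/cos(θ(v) − α(v)))]. Assume θ(z) + α(z) < π/2. Then T has derivative (2/a)·tan(θ(z) − α(z))·sin(α(z))/r at the point z, where r = √(d² + (z − z_i)²). -/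
/-!
The function `x ↦ log ((1 + sin x) / cos x)` is an antiderivative of `sec x`, and along the
vertical coordinate `θ' = cos² θ / d` and `α' = -sin² α / d`. The derivative of the travel time
is therefore `((cos² θ - sin² α) / cos (θ + α) - (cos² θ + sin² α) / cos (θ - α)) / (a d)`;
since `cos (θ + α) cos (θ - α) = cos² θ - sin² α`, this collapses to
`2 tan (θ - α) sin α cos θ / (a d)`, and `r = d / cos θ`.
-/

open Real

theorem hasDerivAt_log_one_add_sin_div_cos {x : ℝ} (hx : cos x ≠ 0) :
    HasDerivAt (fun y => log ((1 + sin y) / cos y)) (cos x)⁻¹ x := by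
  have h_one_add_sin : 1 + sin x ≠ 0 := by
    intro h
    have : cos x ^ 2 = 0 := by nlinarith [sin_sq_add_cos_sq x]
    exact hx (pow_eq_zero_iff two_ne_zero |>.mp this)
  refine (((hasDerivAt_sin x).const_add 1).div (hasDerivAt_cos x) hx).log
    (div_ne_zero h_one_add_sin hx) |>.congr_deriv ?_
  simp only [Pi.div_apply]
  field_simp
  linear_combination sin_sq_add_cos_sq x

theorem hasDerivAt_log_one_add_sin_div_cos_add_sub {θ α : ℝ → ℝ} {θ' α' z : ℝ}
    (hθ : HasDerivAt θ θ' z) (hα : HasDerivAt α α' z)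
    (hadd : cos (θ z + α z) ≠ 0) (hsub : cos (θ z - α z) ≠ 0) :
    HasDerivAt (fun v => log ((1 + sin (θ v + α v)) / cos (θ v + α v)) -
        log ((1 + sin (θ v - α v)) / cos (θ v - α v)))
      ((θ' + α') / cos (θ z + α z) - (θ' - α') / cos (θ z - α z)) z := by
  refine ((hasDerivAt_log_one_add_sin_div_cos hadd).comp z (hθ.add hα)).sub
    ((hasDerivAt_log_one_add_sin_div_cos hsub).comp z (hθ.sub hα)) |>.congr_deriv ?_
  ring

theorem cos_add_mul_cos_sub (x y : ℝ) : cos (x + y) * cos (x - y) = cos x ^ 2 - sin y ^ 2 := by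
  rw [cos_add, cos_sub]
  linear_combination cos x ^ 2 * sin_sq_add_cos_sq y - sin y ^ 2 * sin_sq_add_cos_sq x

theorem div_cos_add_sub_div_cos_sub {x y : ℝ} (hadd : cos (x + y) ≠ 0) (hsub : cos (x - y) ≠ 0) :
    (cos x ^ 2 - sin y ^ 2) / cos (x + y) - (cos x ^ 2 + sin y ^ 2) / cos (x - y)
      = 2 * tan (x - y) * sin y * cos x := by
  rw [← cos_add_mul_cos_sub, tan_eq_sin_div_cos]
  field_simp
  rw [cos_sub, sin_sub]
  linear_combination cos x ^ 2 * sin_sq_add_cos_sq y + sin y ^ 2 * sin_sq_add_cos_sq x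

theorem hasDerivAt_arctan_div_const_s19 {f : ℝ → ℝ} {f' z : ℝ} (hf : HasDerivAt f f' z) (d : ℝ) :
    HasDerivAt (fun v => arctan (f v / d)) (f' * cos (arctan (f z / d)) ^ 2 / d) z := by
  refine (hf.div_const d).arctan.congr_deriv ?_
  rw [cos_sq_arctan]
  ring

theorem hasDerivAt_arctan_const_div_s19 {f : ℝ → ℝ} {f' z d : ℝ} (hf : HasDerivAt f f' z)
    (hd : d ≠ 0) (hfz : f z ≠ 0) :
    HasDerivAt (fun v => arctan (d / f v)) (-f' * sin (arctan (d / f z)) ^ 2 / d) z := by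
  refine ((hasDerivAt_const z d).div hf hfz).arctan.congr_deriv ?_
  simp only [Pi.div_apply, sin_sq_arctan]
  field_simp
  ring

theorem sqrt_sq_add_sq_eq_div_cos_arctan {d : ℝ} (hd : 0 < d) (p : ℝ) :
    √(d ^ 2 + p ^ 2) = d / cos (arctan (p / d)) := by
  rw [cos_arctan, div_div_eq_mul_div, div_one, ← sqrt_sq hd.le, ← sqrt_mul (sq_nonneg d),
    sqrt_sq hd.le]
  congr 1
  field_simp

theorem deriv_rtt_wrt_z_general (a b z zi d : ℝ)
    (hd : 0 < d) (hz : zi ≤ z)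
    (hb : 0 < 2 * b / a + z + zi)
    (θf αf T : ℝ → ℝ)
    (hθf : ∀ v, θf v = Real.arctan ((v - zi) / d))
    (hαf : ∀ v, αf v = Real.arctan (d / (2 * b / a + v + zi)))
    (hT : ∀ v, T v = (1 / a) *
        (Real.log ((1 + Real.sin (θf v + αf v)) / Real.cos (θf v + αf v)) -
         Real.log ((1 + Real.sin (θf v - αf v)) / Real.cos (θf v - αf v))))
    (hang : θf z + αf z < Real.pi / 2)
    (r : ℝ) (hr : r = Real.sqrt (d ^ 2 + (z - zi) ^ 2)) :
    HasDerivAt T ((2 / a) * Real.tan (θf z - αf z) * Real.sin (αf z) / r) z := by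
  have hθ : HasDerivAt θf (cos (θf z) ^ 2 / d) z := by
    rw [hθf z]
    simpa [← funext hθf] using hasDerivAt_arctan_div_const_s19 ((hasDerivAt_id z).sub_const zi) d
  have hα : HasDerivAt αf (-sin (αf z) ^ 2 / d) z := by
    rw [hαf z]
    simpa [← funext hαf] using
      hasDerivAt_arctan_const_div_s19 (((hasDerivAt_id z).const_add (2 * b / a)).add_const zi)
        hd.ne' hb.ne'
  have hθ_nonneg : 0 ≤ θf z := by
    rw [hθf]; exact arctan_nonneg.mpr (div_nonneg (sub_nonneg.mpr hz) hd.le)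
  have hα_mem : αf z ∈ Set.Ioo 0 (π / 2) := by
    rw [hαf]; exact ⟨arctan_pos.mpr (div_pos hd hb), arctan_lt_pi_div_two _⟩
  have hθ_lt : θf z < π / 2 := by rw [hθf]; exact arctan_lt_pi_div_two _
  have hcos_add : cos (θf z + αf z) ≠ 0 :=
    (cos_pos_of_mem_Ioo ⟨by linarith [pi_pos, hα_mem.1], hang⟩).ne'
  have hcos_sub : cos (θf z - αf z) ≠ 0 :=
    (cos_pos_of_mem_Ioo ⟨by linarith [hα_mem.2], by linarith [hα_mem.1]⟩).ne'
  have hr_eq : r = d / cos (θf z) := by rw [hr, hθf, sqrt_sq_add_sq_eq_div_cos_arctan hd]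
  have hT' :=
    (hasDerivAt_log_one_add_sin_div_cos_add_sub hθ hα hcos_add hcos_sub).const_mul (1 / a)
  refine hT'.congr_of_eventuallyEq (.of_forall hT) |>.congr_deriv ?_
  calc _ = 1 / (a * d) * ((cos (θf z) ^ 2 - sin (αf z) ^ 2) / cos (θf z + αf z) -
        (cos (θf z) ^ 2 + sin (αf z) ^ 2) / cos (θf z - αf z)) := by ring
    _ = 1 / (a * d) * (2 * tan (θf z - αf z) * sin (αf z) * cos (θf z)) := by
        rw [div_cos_add_sub_div_cos_sub hcos_add hcos_sub]
    _ = _ := by rw [hr_eq, div_div_eq_mul_div]; ring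

theorem deriv_rtt_wrt_z (a b z zi d : ℝ)
    (ha : 0 < a) (hd : 0 < d) (hz : zi ≤ z)
    (hb : 0 < 2 * b / a + z + zi)
    (θf αf T : ℝ → ℝ)
    (hθf : ∀ v, θf v = Real.arctan ((v - zi) / d))
    (hαf : ∀ v, αf v = Real.arctan (d / (2 * b / a + v + zi)))
    (hT : ∀ v, T v = (1 / a) *
        (Real.log ((1 + Real.sin (θf v + αf v)) / Real.cos (θf v + αf v)) -
         Real.log ((1 + Real.sin (θf v - αf v)) / Real.cos (θf v - αf v))))
    (hang : θf z + αf z < Real.pi / 2)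
    (r : ℝ) (hr : r = Real.sqrt (d ^ 2 + (z - zi) ^ 2)) :
    HasDerivAt T ((2 / a) * Real.tan (θf z - αf z) * Real.sin (αf z) / r) z :=
  deriv_rtt_wrt_z_general a b z zi d hd hz hb θf αf T hθf hαf hT hang r hr
end
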